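/- Let J₀(x) = (1/π) ∫_{-1}^{1} cos(xt)/√(1−t²) dt and K(x) = ∫_0^x J₀(t) dt. Then K is bounded on [0,∞), i.e., there exists C such that |K(x)| ≤ C for all x ≥ 0. -/

import Mathlib

/-!
Integrating first in `x` (Fubini) gives `π K(x) = ∫_{-1}^{1} x sinc(x t) / √(1 - t²) dt`.
Replacing `1 / √(1 - t²)` by `1` leaves `∫_{-1}^{1} x sinc(x t) dt = 2 ∫_0^x sinc`, which is
bounded because integration by parts gives `|∫_a^b sin t / t dt| ≤ 2 / a`. Since
`0 ≤ 1 / √(1 - t²) - 1 ≤ t² / √(1 - t²)` and `|x sinc(x t)| ≤ 1 / |t|`, the error is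
dominated by `1 / √(1 - t²) = arcsin' t`, whose integral over `[-1, 1]` is `π`.
-/

open MeasureTheory Filter Asymptotics Real Set
open scoped Topology

/-- The Bessel function of order zero,
`J₀(x) = (1/π) ∫_{-1}^{1} cos(xt)/√(1−t²) dt`. -/
noncomputable def J0 (x : ℝ) : ℝ :=
  (1 / π) * ∫ t in (-1 : ℝ)..1, Real.cos (x * t) / Real.sqrt (1 - t ^ 2)

/-- The primitive `K(x) = ∫_0^x J₀(t) dt`. -/
noncomputable def K0 (x : ℝ) : ℝ := ∫ t in (0 : ℝ)..x, J0 t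

lemma hasDerivAt_arcsin_of_mem_Ioo {t : ℝ} (ht : t ∈ Ioo (-1 : ℝ) 1) :
    HasDerivAt arcsin (1 / √(1 - t ^ 2)) t :=
  hasDerivAt_arcsin ht.1.ne' ht.2.ne

lemma integrableOn_one_div_sqrt_one_sub_sq :
    IntegrableOn (fun t : ℝ => 1 / √(1 - t ^ 2)) (Ioc (-1) 1) :=
  intervalIntegral.integrableOn_deriv_of_nonneg continuous_arcsin.continuousOn
    (fun _ ht => hasDerivAt_arcsin_of_mem_Ioo ht) (fun _ _ => by positivity)

lemma intervalIntegrable_one_div_sqrt_one_sub_sq :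
    IntervalIntegrable (fun t : ℝ => 1 / √(1 - t ^ 2)) volume (-1) 1 :=
  (intervalIntegrable_iff_integrableOn_Ioc_of_le (by norm_num)).2
    integrableOn_one_div_sqrt_one_sub_sq

lemma integral_one_div_sqrt_one_sub_sq : ∫ t in (-1 : ℝ)..1, 1 / √(1 - t ^ 2) = π := by
  rw [intervalIntegral.integral_eq_sub_of_hasDerivAt_of_le (by norm_num)
    continuous_arcsin.continuousOn (fun _ ht => hasDerivAt_arcsin_of_mem_Ioo ht)
    intervalIntegrable_one_div_sqrt_one_sub_sq, arcsin_one, arcsin_neg_one]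
  ring

lemma abs_one_div_sqrt_one_sub_sq_sub_one_le {t : ℝ} (ht : t ∈ Ioo (-1 : ℝ) 1) :
    |1 / √(1 - t ^ 2) - 1| ≤ t ^ 2 / √(1 - t ^ 2) := by
  have hs : 0 < √(1 - t ^ 2) := sqrt_pos.2 (by nlinarith [ht.1, ht.2])
  have hs1 : √(1 - t ^ 2) ≤ 1 := sqrt_le_one.2 (by nlinarith)
  have hsq : √(1 - t ^ 2) ^ 2 = 1 - t ^ 2 := sq_sqrt (by nlinarith [ht.1, ht.2])
  rw [abs_of_nonneg (by rw [sub_nonneg, le_div_iff₀ hs]; linarith), div_sub_one hs.ne',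
    div_le_div_iff_of_pos_right hs]
  nlinarith

lemma abs_mul_sinc_mul_le_inv_abs (x : ℝ) {t : ℝ} (ht : t ≠ 0) :
    |x * sinc (x * t)| ≤ |t|⁻¹ := by
  rcases eq_or_ne x 0 with rfl | hx
  · simp
  · have : x * sinc (x * t) = sin (x * t) * t⁻¹ := by
      rw [sinc_of_ne_zero (mul_ne_zero hx ht)]
      field_simp
    rw [this, abs_mul, abs_inv]
    exact mul_le_of_le_one_left (by positivity) (abs_sin_le_one _)

lemma mul_integral_sinc_comp_mul_left (x : ℝ) :
    x * ∫ t in (-1 : ℝ)..1, sinc (x * t) = 2 * ∫ t in (0 : ℝ)..x, sinc t := by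
  rcases eq_or_ne x 0 with rfl | hx
  · simp
  have heven : ∫ t in -x..0, sinc t = ∫ t in (0 : ℝ)..x, sinc t := by
    simpa only [sinc_neg, neg_zero] using
      (intervalIntegral.integral_comp_neg (a := 0) (b := x) sinc).symm
  rw [intervalIntegral.integral_comp_mul_left sinc hx, smul_eq_mul, ← mul_assoc,
    mul_inv_cancel₀ hx, one_mul, mul_neg_one, mul_one,
    ← intervalIntegral.integral_add_adjacent_intervals (b := 0)
      (continuous_sinc.intervalIntegrable _ _) (continuous_sinc.intervalIntegrable _ _), heven]
  ring

lemma abs_integral_sinc_le_abs_sub (a b : ℝ) : |∫ t in a..b, sinc t| ≤ |b - a| := by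
  simpa using intervalIntegral.norm_integral_le_of_norm_le_const (C := 1) (f := sinc)
    fun t _ => abs_sinc_le_one t

lemma abs_integral_sinc_le_two_div {a b : ℝ} (ha : 0 < a) (hab : a ≤ b) :
    |∫ t in a..b, sinc t| ≤ 2 / a := by
  have hpos : ∀ t ∈ uIcc a b, 0 < t := fun t ht => ha.trans_le (uIcc_of_le hab ▸ ht).1
  have hinv_sq : ContinuousOn (fun t : ℝ => (t ^ 2)⁻¹) (uIcc a b) :=
    (continuousOn_pow 2).inv₀ fun t ht => pow_ne_zero 2 (hpos t ht).ne'
  have hsinc : ∫ t in a..b, sinc t = ∫ t in a..b, t⁻¹ * sin t :=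
    intervalIntegral.integral_congr fun t ht => by
      rw [sinc_of_ne_zero (hpos t ht).ne', div_eq_inv_mul]
  have hparts : ∫ t in a..b, t⁻¹ * sin t
      = a⁻¹ * cos a - b⁻¹ * cos b - ∫ t in a..b, (t ^ 2)⁻¹ * cos t := by
    rw [intervalIntegral.integral_mul_deriv_eq_deriv_mul (u := fun t => t⁻¹)
      (v := fun t => -cos t) (u' := fun t => -(t ^ 2)⁻¹)
      (fun t ht => hasDerivAt_inv (hpos t ht).ne')
      (fun t _ => (hasDerivAt_cos t).neg.congr_deriv (neg_neg _))
      hinv_sq.neg.intervalIntegrable (continuous_sin.intervalIntegrable _ _)]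
    simp only [mul_neg, neg_mul, neg_neg]
    ring
  have hrest : |∫ t in a..b, (t ^ 2)⁻¹ * cos t| ≤ a⁻¹ - b⁻¹ := by
    have hprim : ∫ t in a..b, (t ^ 2)⁻¹ = a⁻¹ - b⁻¹ := by
      rw [intervalIntegral.integral_eq_sub_of_hasDerivAt (f := fun t => -t⁻¹)
        (fun t ht => (hasDerivAt_inv (hpos t ht).ne').neg.congr_deriv (neg_neg _))
        hinv_sq.intervalIntegrable]
      ring
    rw [← hprim, ← norm_eq_abs]
    refine intervalIntegral.norm_integral_le_of_norm_le hab
      (Eventually.of_forall fun t _ => ?_) hinv_sq.intervalIntegrable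
    rw [norm_mul, norm_inv, norm_pow, norm_eq_abs, sq_abs]
    exact mul_le_of_le_one_right (by positivity) (abs_cos_le_one t)
  have hb : 0 < b := ha.trans_le hab
  rw [hsinc, hparts]
  calc |a⁻¹ * cos a - b⁻¹ * cos b - ∫ t in a..b, (t ^ 2)⁻¹ * cos t|
      ≤ |a⁻¹ * cos a| + |b⁻¹ * cos b| + |∫ t in a..b, (t ^ 2)⁻¹ * cos t| :=
        (abs_sub _ _).trans (add_le_add_left (abs_sub _ _) _)
    _ ≤ a⁻¹ + b⁻¹ + (a⁻¹ - b⁻¹) := by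
        gcongr
        · rw [abs_mul, abs_inv, abs_of_pos ha]
          exact mul_le_of_le_one_right (by positivity) (abs_cos_le_one a)
        · rw [abs_mul, abs_inv, abs_of_pos hb]
          exact mul_le_of_le_one_right (by positivity) (abs_cos_le_one b)
    _ = 2 / a := by ring

lemma abs_integral_sinc_le_three {x : ℝ} (hx : 0 ≤ x) :
    |∫ t in (0 : ℝ)..x, sinc t| ≤ 3 := by
  rcases le_total x 1 with hx1 | hx1
  · have := abs_integral_sinc_le_abs_sub 0 x
    rw [sub_zero, abs_of_nonneg hx] at this
    linarith
  · rw [← intervalIntegral.integral_add_adjacent_intervals (b := 1)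
      (continuous_sinc.intervalIntegrable _ _) (continuous_sinc.intervalIntegrable _ _)]
    calc |(∫ t in (0 : ℝ)..1, sinc t) + ∫ t in (1 : ℝ)..x, sinc t|
        ≤ |∫ t in (0 : ℝ)..1, sinc t| + |∫ t in (1 : ℝ)..x, sinc t| := abs_add_le _ _
      _ ≤ 1 + 2 / 1 := by
          gcongr
          · simpa using abs_integral_sinc_le_abs_sub 0 1
          · exact abs_integral_sinc_le_two_div one_pos hx1
      _ = 3 := by norm_num

lemma integral_cos_mul_eq_mul_sinc (x t : ℝ) :
    ∫ s in (0 : ℝ)..x, cos (s * t) = x * sinc (x * t) := by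
  rcases eq_or_ne t 0 with rfl | ht
  · simp
  · rw [intervalIntegral.integral_comp_mul_right cos ht, integral_cos, zero_mul, sin_zero,
      sub_zero, smul_eq_mul]
    rcases eq_or_ne x 0 with rfl | hx
    · simp
    · rw [sinc_of_ne_zero (mul_ne_zero hx ht)]
      field_simp

lemma K0_eq_integral_mul_sinc {x : ℝ} (hx : 0 ≤ x) :
    K0 x = π⁻¹ * ∫ t in (-1 : ℝ)..1, x * sinc (x * t) / √(1 - t ^ 2) := by
  have hint : Integrable (Function.uncurry fun s t : ℝ => cos (s * t) / √(1 - t ^ 2))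
      ((volume.restrict (Ioc 0 x)).prod (volume.restrict (Ioc (-1) 1))) := by
    refine ((integrable_const (1 : ℝ)).mul_prod integrableOn_one_div_sqrt_one_sub_sq).mono'
      (Measurable.aestronglyMeasurable (by unfold Function.uncurry; fun_prop))
      (Eventually.of_forall fun p => ?_)
    rw [Function.uncurry_apply_pair, norm_div, norm_of_nonneg (sqrt_nonneg _), one_mul]
    exact div_le_div_of_nonneg_right (by simpa using abs_cos_le_one _) (sqrt_nonneg _)
  simp only [K0, J0, intervalIntegral.integral_const_mul, one_div]
  congr 1
  rw [intervalIntegral.integral_of_le hx, intervalIntegral.integral_of_le (by norm_num)]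
  simp only [intervalIntegral.integral_of_le (show (-1 : ℝ) ≤ 1 by norm_num)]
  rw [integral_integral_swap hint]
  refine setIntegral_congr_fun measurableSet_Ioc fun t _ => ?_
  rw [integral_div, ← intervalIntegral.integral_of_le hx, integral_cos_mul_eq_mul_sinc]

lemma abs_mul_sinc_div_sqrt_sub_le (x : ℝ) {t : ℝ} (ht : t ∈ Ioo (-1 : ℝ) 1) :
    |x * sinc (x * t) / √(1 - t ^ 2) - x * sinc (x * t)| ≤ 1 / √(1 - t ^ 2) := by
  rcases eq_or_ne t 0 with rfl | ht0
  · simp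
  have ht1 : |t| ≤ 1 := abs_le.2 ⟨ht.1.le, ht.2.le⟩
  rw [div_eq_mul_one_div, ← mul_sub_one, abs_mul]
  calc |x * sinc (x * t)| * |1 / √(1 - t ^ 2) - 1|
      ≤ |t|⁻¹ * (t ^ 2 / √(1 - t ^ 2)) :=
        mul_le_mul (abs_mul_sinc_mul_le_inv_abs x ht0)
          (abs_one_div_sqrt_one_sub_sq_sub_one_le ht) (abs_nonneg _) (by positivity)
    _ = |t| * (1 / √(1 - t ^ 2)) := by
        rw [← sq_abs]; field_simp
    _ ≤ 1 / √(1 - t ^ 2) := mul_le_of_le_one_left (by positivity) ht1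

lemma ae_restrict_uIoc_neg_one_one_mem_Ioo :
    ∀ᵐ t ∂volume.restrict (uIoc (-1 : ℝ) 1), t ∈ Ioo (-1 : ℝ) 1 := by
  rw [uIoc_of_le (by norm_num)]
  exact ae_restrict_of_ae_eq_of_ae_restrict Ioo_ae_eq_Ioc (ae_restrict_mem measurableSet_Ioo)

lemma abs_integral_mul_sinc_div_sqrt_sub_integral_le (x : ℝ) :
    |(∫ t in (-1 : ℝ)..1, x * sinc (x * t) / √(1 - t ^ 2)) -
        ∫ t in (-1 : ℝ)..1, x * sinc (x * t)| ≤ π := by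
  set f : ℝ → ℝ := fun t => x * sinc (x * t)
  have hf : IntervalIntegrable f volume (-1) 1 :=
    (by fun_prop : Continuous f).intervalIntegrable _ _
  have hbound : ∀ᵐ t ∂volume.restrict (uIoc (-1 : ℝ) 1),
      ‖f t / √(1 - t ^ 2) - f t‖ ≤ 1 / √(1 - t ^ 2) :=
    ae_restrict_uIoc_neg_one_one_mem_Ioo.mono fun t ht => abs_mul_sinc_div_sqrt_sub_le x ht
  have herr : IntervalIntegrable (fun t => f t / √(1 - t ^ 2) - f t) volume (-1) 1 :=
    intervalIntegrable_one_div_sqrt_one_sub_sq.mono_fun'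
      (Measurable.aestronglyMeasurable (by fun_prop)) hbound
  have hf' : IntervalIntegrable (fun t => f t / √(1 - t ^ 2)) volume (-1) 1 := by
    simpa using herr.add hf
  rw [← intervalIntegral.integral_sub hf' hf, ← norm_eq_abs, ← abs_of_pos pi_pos,
    ← integral_one_div_sqrt_one_sub_sq]
  exact intervalIntegral.norm_integral_le_abs_of_norm_le hbound
    intervalIntegrable_one_div_sqrt_one_sub_sq

/-- `K(x) = ∫_0^x J₀(t) dt` is bounded on `[0, ∞)`. -/
theorem K0_bounded : ∃ C : ℝ, ∀ x : ℝ, 0 ≤ x → |K0 x| ≤ C := by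
  refine ⟨π⁻¹ * (π + 6), fun x hx => ?_⟩
  have hsinc : |∫ t in (-1 : ℝ)..1, x * sinc (x * t)| ≤ 6 := by
    rw [intervalIntegral.integral_const_mul, mul_integral_sinc_comp_mul_left, abs_mul, abs_two]
    linarith [abs_integral_sinc_le_three hx]
  rw [K0_eq_integral_mul_sinc hx, abs_mul, abs_inv, abs_of_pos pi_pos]
  gcongr
  linarith [abs_integral_mul_sinc_div_sqrt_sub_integral_le x,
    abs_sub_abs_le_abs_sub (∫ t in (-1 : ℝ)..1, x * sinc (x * t) / √(1 - t ^ 2))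
      (∫ t in (-1 : ℝ)..1, x * sinc (x * t))]
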